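/- arXiv:2405.08353 — 3 statements merged into one kernel-verified Lean document; each statement's English description precedes it below -/
import Mathlib

section
/- Let p1^{k+1}, p2^{k+1} be probability distributions on A^{k+1} and let p1^k, p2^k be their marginals on A^k obtained by summing over the last letter (p_i^k(w) = Σ_{a∈A} p_i^{k+1}(wa)). Let π^{k+1} be an optimal coupling for the Cantor ground distance on A^{k+1}. If w ∈ A^k satisfies p1^k(w) > p2^k(w), then Σ_{w'≠w} Σ_{a1,a2∈A} π^{k+1}(w a1, w' a2) = p1^k(w) − p2^k(w) and Σ_{w'≠w} Σ_{a1,a2∈A} π^{k+1}(w' a1, w a2) = 0. -/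
/-- The length of the longest common prefix of two words `w1 w2 : Fin k → A`. -/
def lcpLen {A : Type*} [DecidableEq A] {k : ℕ} (w1 w2 : Fin k → A) : ℕ :=
  (Finset.filter (fun i : Fin k => ∀ j, j ≤ i → w1 j = w2 j) Finset.univ).card

/-- The Cantor distance on words of length `k`. -/
noncomputable def cantor {A : Type*} [DecidableEq A] {k : ℕ} (w1 w2 : Fin k → A) : ℝ :=
  if w1 = w2 then 0 else (2 : ℝ) ^ (-(lcpLen w1 w2 : ℤ))

/-- `p` is a probability distribution on the finite set `X`. -/
def IsProbDist {X : Type*} [Fintype X] (p : X → ℝ) : Prop :=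
  (∀ x, 0 ≤ p x) ∧ ∑ x, p x = 1

/-- `π` is a coupling of `p1` and `p2`. -/
def IsCoupling {X : Type*} [Fintype X] (p1 p2 : X → ℝ) (π : X → X → ℝ) : Prop :=
  (∀ x y, 0 ≤ π x y) ∧ (∀ x, ∑ y, π x y = p1 x) ∧ (∀ y, ∑ x, π x y = p2 y)

/-- The Kantorovich (optimal transport) cost between `p1` and `p2` with ground cost `D`. -/
noncomputable def kant {X : Type*} [Fintype X] (D : X → X → ℝ) (p1 p2 : X → ℝ) : ℝ :=
  sInf {c : ℝ | ∃ π : X → X → ℝ, IsCoupling p1 p2 π ∧ c = ∑ x, ∑ y, D x y * π x y}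

/-- `π` is an optimal coupling of `p1` and `p2` for the ground cost `D`. -/
def IsOptimalCoupling {X : Type*} [Fintype X] (D : X → X → ℝ) (p1 p2 : X → ℝ)
    (π : X → X → ℝ) : Prop :=
  IsCoupling p1 p2 π ∧ ∀ π' : X → X → ℝ, IsCoupling p1 p2 π' →
    ∑ x, ∑ y, D x y * π x y ≤ ∑ x, ∑ y, D x y * π' x y


section CantorHelpers

variable {A : Type*} [DecidableEq A] {n : ℕ}

lemma lcpLen_le {u v : Fin n → A} {i : Fin n} (h : u i ≠ v i) : lcpLen u v ≤ i.val := by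
  have hsub : (Finset.filter (fun j : Fin n => ∀ l, l ≤ j → u l = v l) Finset.univ)
      ⊆ Finset.Iio i := by
    intro j hj
    simp only [Finset.mem_filter, Finset.mem_univ, true_and] at hj
    rw [Finset.mem_Iio]
    by_contra hlt
    exact h (hj i (le_of_not_gt hlt))
  calc lcpLen u v ≤ (Finset.Iio i).card := Finset.card_le_card hsub
    _ = i.val := Fin.card_Iio i

lemma eq_of_lt_lcpLen {u v : Fin n → A} {j : Fin n} (h : (j : ℕ) < lcpLen u v) : u j = v j := by
  by_contra hne
  exact absurd (lcpLen_le hne) (not_le.mpr h)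

lemma le_lcpLen {u v : Fin (n+1) → A} {m : ℕ} (hm : m ≤ n + 1)
    (h : ∀ j : Fin (n+1), (j : ℕ) < m → u j = v j) : m ≤ lcpLen u v := by
  have hsub : Finset.filter (fun j : Fin (n+1) => (j:ℕ) < m) Finset.univ
      ⊆ Finset.filter (fun i : Fin (n+1) => ∀ j, j ≤ i → u j = v j) Finset.univ := by
    intro j hj
    simp only [Finset.mem_filter, Finset.mem_univ, true_and] at *
    intro l hl
    exact h l (lt_of_le_of_lt (Fin.le_iff_val_le_val.mp hl) hj)
  have hcard : (Finset.filter (fun j : Fin (n+1) => (j:ℕ) < m) Finset.univ).card = m := by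
    rcases Nat.lt_or_ge m (n+1) with hlt | hge
    · have : Finset.filter (fun j : Fin (n+1) => (j:ℕ) < m) Finset.univ = Finset.Iio ⟨m, hlt⟩ := by
        ext j; simp [Finset.mem_Iio, Fin.lt_iff_val_lt_val]
      rw [this, Fin.card_Iio]
    · have hm' : m = n + 1 := le_antisymm hm hge
      subst hm'
      have : Finset.filter (fun j : Fin (n+1) => (j:ℕ) < n+1) Finset.univ = Finset.univ := by
        ext j; simp [j.isLt, Fin.is_le]
      rw [this]; simp
  calc m = _ := hcard.symm
    _ ≤ _ := Finset.card_le_card hsub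

lemma cantor_nonneg (u v : Fin n → A) : 0 ≤ cantor u v := by
  unfold cantor; split
  · exact le_refl _
  · positivity

lemma cantor_ultra (u x v : Fin (n+1) → A) :
    cantor u v ≤ max (cantor u x) (cantor x v) := by
  rcases eq_or_ne u v with rfl | huv
  · simp only [cantor, if_pos rfl]
    exact le_max_of_le_left (cantor_nonneg u x)
  rcases eq_or_ne u x with rfl | hux
  · exact le_max_right _ _
  rcases eq_or_ne x v with rfl | hxv
  · exact le_max_left _ _
  have hmin : min (lcpLen u x) (lcpLen x v) ≤ lcpLen u v := by
    apply le_lcpLen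
    · calc min (lcpLen u x) (lcpLen x v) ≤ lcpLen u x := min_le_left _ _
        _ ≤ (Finset.univ : Finset (Fin (n+1))).card :=
          Finset.card_le_card (Finset.filter_subset _ _)
        _ = n + 1 := by simp
    · intro j hj
      have h1 := eq_of_lt_lcpLen (lt_of_lt_of_le hj (min_le_left (lcpLen u x) (lcpLen x v)))
      have h2 := eq_of_lt_lcpLen (lt_of_lt_of_le hj (min_le_right (lcpLen u x) (lcpLen x v)))
      exact h1.trans h2
  simp only [cantor, if_neg huv, if_neg hux, if_neg hxv]
  rcases le_total (lcpLen u x) (lcpLen x v) with hle | hle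
  · apply le_max_of_le_left
    apply zpow_le_zpow_right₀ one_le_two
    simp only [neg_le_neg_iff, Int.ofNat_le]
    omega
  · apply le_max_of_le_right
    apply zpow_le_zpow_right₀ one_le_two
    simp only [neg_le_neg_iff, Int.ofNat_le]
    omega

lemma cantor_snoc_snoc_le {k : ℕ} (w : Fin k → A) (a1 a2 : A) :
    cantor (Fin.snoc w a1) (Fin.snoc w a2) ≤ (2:ℝ) ^ (-(k:ℤ)) := by
  rcases eq_or_ne a1 a2 with rfl | hne
  · simp only [cantor, if_pos rfl]; positivity
  have hne' : (Fin.snoc w a1 : Fin (k+1) → A) ≠ Fin.snoc w a2 := by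
    intro h
    exact hne (by simpa using congrFun h (Fin.last k))
  have hl : k ≤ lcpLen (Fin.snoc w a1 : Fin (k+1) → A) (Fin.snoc w a2) := by
    apply le_lcpLen (by omega)
    intro j hj
    have : j = Fin.castSucc ⟨j, hj⟩ := by simp [Fin.ext_iff]
    rw [this, Fin.snoc_castSucc, Fin.snoc_castSucc]
  simp only [cantor, if_neg hne']
  apply zpow_le_zpow_right₀ one_le_two
  omega

lemma cantor_prefix_ge {k : ℕ} {u v : Fin (k+1) → A} {i : Fin (k+1)} (hi : (i:ℕ) < k)
    (h : u i ≠ v i) : (2:ℝ) ^ (1-(k:ℤ)) ≤ cantor u v := by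
  have hne : u ≠ v := fun he => h (congrFun he i)
  have hl : lcpLen u v ≤ i.val := lcpLen_le h
  simp only [cantor, if_neg hne]
  apply zpow_le_zpow_right₀ one_le_two
  omega

omit [DecidableEq A] in
lemma sum_snoc_decomp {k : ℕ} [Fintype A] (f : (Fin (k+1) → A) → ℝ) :
    ∑ v, f v = ∑ w' : Fin k → A, ∑ a : A, f (Fin.snoc w' a) := by
  rw [← Equiv.sum_comp (Fin.snocEquiv (fun _ => A)) f]
  rw [Fintype.sum_prod_type]
  rw [Finset.sum_comm]
  rfl

end CantorHelpers

lemma sum_pair_ind_fst {X : Type*} [Fintype X] [DecidableEq X] (y c1 c2 : X) :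
    (∑ z : X, if (y, z) = (c1, c2) then (1:ℝ) else 0) = if y = c1 then 1 else 0 := by
  by_cases h : y = c1 <;> simp [Prod.ext_iff, h, Finset.sum_ite_eq']

lemma sum_pair_ind_snd {X : Type*} [Fintype X] [DecidableEq X] (z c1 c2 : X) :
    (∑ y : X, if (y, z) = (c1, c2) then (1:ℝ) else 0) = if z = c2 then 1 else 0 := by
  by_cases h : z = c2 <;> simp [Prod.ext_iff, h, Finset.sum_ite_eq']

lemma sum_cost_ind {X : Type*} [Fintype X] [DecidableEq X] (D : X → X → ℝ) (q : X × X) :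
    (∑ p : X × X, D p.1 p.2 * if p = q then (1:ℝ) else 0) = D q.1 q.2 := by
  simp [mul_ite, mul_one, mul_zero, Finset.sum_ite_eq']

/-- For an optimal coupling for the Cantor distance on `A^{k+1}`, the off-diagonal block mass
emanating from the cylinder of a word `w ∈ A^k` whose first marginal dominates the second is
exactly the excess of the marginals, and no off-diagonal mass enters that cylinder. -/
theorem optimal_coupling_excess {A : Type*} [Fintype A] [DecidableEq A] {k : ℕ} (hk : 1 ≤ k)
    (p1 p2 : (Fin (k + 1) → A) → ℝ) (hp1 : IsProbDist p1) (hp2 : IsProbDist p2)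
    (π : (Fin (k + 1) → A) → (Fin (k + 1) → A) → ℝ)
    (hπ : IsOptimalCoupling cantor p1 p2 π)
    (w : Fin k → A)
    (hw : ∑ a : A, p2 (Fin.snoc w a) < ∑ a : A, p1 (Fin.snoc w a)) :
    (∑ w' ∈ Finset.univ.erase w, ∑ a1 : A, ∑ a2 : A,
        π (Fin.snoc w a1) (Fin.snoc w' a2)
      = ∑ a : A, p1 (Fin.snoc w a) - ∑ a : A, p2 (Fin.snoc w a)) ∧
    (∑ w' ∈ Finset.univ.erase w, ∑ a1 : A, ∑ a2 : A,
        π (Fin.snoc w' a1) (Fin.snoc w a2) = 0) := by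
  classical
  obtain ⟨⟨hnn, hrow, hcol⟩, hopt⟩ := hπ
  -- marginal decompositions
  have h1 : ∑ a : A, p1 (Fin.snoc w a)
      = (∑ a1 : A, ∑ a2 : A, π (Fin.snoc w a1) (Fin.snoc w a2))
        + ∑ w' ∈ Finset.univ.erase w, ∑ a1 : A, ∑ a2 : A,
            π (Fin.snoc w a1) (Fin.snoc w' a2) := by
    have e1 : ∀ a1 : A, p1 (Fin.snoc w a1)
        = ∑ w' : Fin k → A, ∑ a2 : A, π (Fin.snoc w a1) (Fin.snoc w' a2) := by
      intro a1; rw [← hrow (Fin.snoc w a1), sum_snoc_decomp]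
    calc ∑ a : A, p1 (Fin.snoc w a)
        = ∑ a1 : A, ∑ w' : Fin k → A, ∑ a2 : A, π (Fin.snoc w a1) (Fin.snoc w' a2) :=
          Finset.sum_congr rfl (fun a _ => e1 a)
      _ = ∑ w' : Fin k → A, ∑ a1 : A, ∑ a2 : A, π (Fin.snoc w a1) (Fin.snoc w' a2) :=
          Finset.sum_comm
      _ = _ := (Finset.add_sum_erase _ _ (Finset.mem_univ w)).symm
  have h2 : ∑ a : A, p2 (Fin.snoc w a)
      = (∑ a1 : A, ∑ a2 : A, π (Fin.snoc w a1) (Fin.snoc w a2))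
        + ∑ w' ∈ Finset.univ.erase w, ∑ a1 : A, ∑ a2 : A,
            π (Fin.snoc w' a1) (Fin.snoc w a2) := by
    have e2 : ∀ a2 : A, p2 (Fin.snoc w a2)
        = ∑ w' : Fin k → A, ∑ a1 : A, π (Fin.snoc w' a1) (Fin.snoc w a2) := by
      intro a2; rw [← hcol (Fin.snoc w a2), sum_snoc_decomp]
    calc ∑ a : A, p2 (Fin.snoc w a)
        = ∑ a2 : A, ∑ w' : Fin k → A, ∑ a1 : A, π (Fin.snoc w' a1) (Fin.snoc w a2) :=
          Finset.sum_congr rfl (fun a _ => e2 a)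
      _ = ∑ w' : Fin k → A, ∑ a2 : A, ∑ a1 : A, π (Fin.snoc w' a1) (Fin.snoc w a2) :=
          Finset.sum_comm
      _ = ∑ w' : Fin k → A, ∑ a1 : A, ∑ a2 : A, π (Fin.snoc w' a1) (Fin.snoc w a2) :=
          Finset.sum_congr rfl (fun w' _ => Finset.sum_comm)
      _ = _ := (Finset.add_sum_erase _ _ (Finset.mem_univ w)).symm
  have hS2nonneg : 0 ≤ ∑ w' ∈ Finset.univ.erase w, ∑ a1 : A, ∑ a2 : A,
      π (Fin.snoc w' a1) (Fin.snoc w a2) :=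
    Finset.sum_nonneg fun _ _ => Finset.sum_nonneg fun _ _ =>
      Finset.sum_nonneg fun _ _ => hnn _ _
  -- the key claim: no mass enters the cylinder of w from outside
  have key : ∑ w' ∈ Finset.univ.erase w, ∑ a1 : A, ∑ a2 : A,
      π (Fin.snoc w' a1) (Fin.snoc w a2) = 0 := by
    by_contra hS2
    have hS2pos : 0 < ∑ w' ∈ Finset.univ.erase w, ∑ a1 : A, ∑ a2 : A,
        π (Fin.snoc w' a1) (Fin.snoc w a2) := lt_of_le_of_ne hS2nonneg (Ne.symm hS2)
    have hS1pos : 0 < ∑ w' ∈ Finset.univ.erase w, ∑ a1 : A, ∑ a2 : A,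
        π (Fin.snoc w a1) (Fin.snoc w' a2) := by linarith
    -- extract a positive entering entry
    have hin : ∃ w2 ∈ Finset.univ.erase w, ∃ a b : A,
        0 < π (Fin.snoc w2 a) (Fin.snoc w b) := by
      by_contra hcon
      push_neg at hcon
      refine absurd ?_ (ne_of_gt hS2pos)
      exact Finset.sum_eq_zero fun w2 hw2 => Finset.sum_eq_zero fun a _ =>
        Finset.sum_eq_zero fun b _ => le_antisymm (hcon w2 hw2 a b) (hnn _ _)
    have hout : ∃ w1 ∈ Finset.univ.erase w, ∃ a b : A,
        0 < π (Fin.snoc w a) (Fin.snoc w1 b) := by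
      by_contra hcon
      push_neg at hcon
      refine absurd ?_ (ne_of_gt hS1pos)
      have : ∑ w' ∈ Finset.univ.erase w, ∑ a1 : A, ∑ a2 : A,
          π (Fin.snoc w a1) (Fin.snoc w' a2) = 0 :=
        Finset.sum_eq_zero fun w1 hw1 => Finset.sum_eq_zero fun a _ =>
          Finset.sum_eq_zero fun b _ => le_antisymm (hcon w1 hw1 a b) (hnn _ _)
      exact this
    obtain ⟨w2, hw2mem, a, b, hin⟩ := hin
    obtain ⟨w1, hw1mem, a1, b1, hout⟩ := hout
    have hw2ne : w2 ≠ w := (Finset.mem_erase.mp hw2mem).1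
    have hw1ne : w1 ≠ w := (Finset.mem_erase.mp hw1mem).1
    obtain ⟨i2, hi2⟩ := Function.ne_iff.mp hw2ne
    obtain ⟨i1, hi1⟩ := Function.ne_iff.mp hw1ne
    set u : Fin (k+1) → A := Fin.snoc w2 a with hu
    set x2 : Fin (k+1) → A := Fin.snoc w b with hx2
    set x1 : Fin (k+1) → A := Fin.snoc w a1 with hx1
    set v : Fin (k+1) → A := Fin.snoc w1 b1 with hv
    have hux2i : u (Fin.castSucc i2) ≠ x2 (Fin.castSucc i2) := by
      rw [hu, hx2, Fin.snoc_castSucc, Fin.snoc_castSucc]; exact hi2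
    have hx1vi : x1 (Fin.castSucc i1) ≠ v (Fin.castSucc i1) := by
      rw [hx1, hv, Fin.snoc_castSucc, Fin.snoc_castSucc]; exact fun h => hi1 h.symm
    have hux1 : u ≠ x1 := by
      intro h
      exact hi2 (by simpa [hu, hx1] using congrFun h (Fin.castSucc i2))
    have hx2v : x2 ≠ v := by
      intro h
      exact hi1 (by simpa [hx2, hv] using (congrFun h (Fin.castSucc i1)).symm)
    set ε : ℝ := min (π u x2) (π x1 v) with hεdef
    have hεpos : 0 < ε := lt_min hin hout
    have hεle1 : ε ≤ π u x2 := min_le_left _ _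
    have hεle2 : ε ≤ π x1 v := min_le_right _ _
    -- distance inequalities
    have hd1 : (2:ℝ) ^ (1-(k:ℤ)) ≤ cantor u x2 :=
      cantor_prefix_ge (by simpa using i2.isLt) hux2i
    have hd2 : (2:ℝ) ^ (1-(k:ℤ)) ≤ cantor x1 v :=
      cantor_prefix_ge (by simpa using i1.isLt) hx1vi
    have hx1x2 : cantor x1 x2 ≤ (2:ℝ) ^ (-(k:ℤ)) := cantor_snoc_snoc_le w a1 b
    have hx2x1 : cantor x2 x1 ≤ (2:ℝ) ^ (-(k:ℤ)) := cantor_snoc_snoc_le w b a1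
    have h2k : (2:ℝ) ^ (-(k:ℤ)) < (2:ℝ) ^ (1-(k:ℤ)) := by
      apply zpow_lt_zpow_right₀ one_lt_two; omega
    have hx2v' : cantor x2 v ≤ cantor x1 v := by
      calc cantor x2 v ≤ max (cantor x2 x1) (cantor x1 v) := cantor_ultra _ _ _
        _ ≤ cantor x1 v := max_le (by linarith) le_rfl
    have huv : cantor u v ≤ max (cantor u x2) (cantor x1 v) := by
      calc cantor u v ≤ max (cantor u x2) (cantor x2 v) := cantor_ultra _ _ _
        _ ≤ max (cantor u x2) (cantor x1 v) := max_le_max le_rfl hx2v'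
    have hΔ : cantor u v + cantor x1 x2 - cantor u x2 - cantor x1 v < 0 := by
      have hmaxmin : max (cantor u x2) (cantor x1 v) + min (cantor u x2) (cantor x1 v)
          = cantor u x2 + cantor x1 v := max_add_min _ _
      have hminge : (2:ℝ) ^ (1-(k:ℤ)) ≤ min (cantor u x2) (cantor x1 v) := le_min hd1 hd2
      linarith
    -- the perturbed coupling
    set π' : (Fin (k+1) → A) → (Fin (k+1) → A) → ℝ := fun y z =>
      π y z + ε * ((if (y, z) = (u, v) then (1:ℝ) else 0)
        + (if (y, z) = (x1, x2) then (1:ℝ) else 0)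
        - (if (y, z) = (u, x2) then (1:ℝ) else 0)
        - (if (y, z) = (x1, v) then (1:ℝ) else 0)) with hπ'def
    have hcoupling : IsCoupling p1 p2 π' := by
      refine ⟨?_, ?_, ?_⟩
      · intro y z
        simp only [hπ'def]
        by_cases hyu : y = u <;> by_cases hyx : y = x1 <;>
          by_cases hzv : z = v <;> by_cases hzx : z = x2
        all_goals first
          | exact absurd (‹y = u›.symm.trans ‹y = x1›) hux1
          | exact absurd (‹z = x2›.symm.trans ‹z = v›) hx2v
          | (simp only [Prod.mk.injEq, hyu, hyx, hzv, hzx]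
             simp only [hux1, hx2v, Ne.symm hux1, Ne.symm hx2v, eq_self_iff_true, true_and, and_true, false_and,
               and_false, if_true, if_false, not_false_iff, and_self,
               ite_true, ite_false]
             first
               | linarith [hnn y z, hnn u v, hnn u z, hnn y v, hnn u x2, hnn x1 v,
                   hnn x1 x2, hnn x1 z, hnn y x2, hεpos.le, hεle1, hεle2]
               | (norm_num
                  linarith [hnn y z, hnn u v, hnn u z, hnn y v, hnn u x2, hnn x1 v,
                    hnn x1 x2, hnn x1 z, hnn y x2, hεpos.le, hεle1, hεle2]))
      · intro y
        simp only [hπ'def]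
        rw [Finset.sum_add_distrib, ← Finset.mul_sum]
        simp only [Finset.sum_add_distrib, Finset.sum_sub_distrib,
          sum_pair_ind_fst]
        linear_combination hrow y
      · intro z
        simp only [hπ'def]
        rw [Finset.sum_add_distrib, ← Finset.mul_sum]
        simp only [Finset.sum_add_distrib, Finset.sum_sub_distrib,
          sum_pair_ind_snd]
        linear_combination hcol z
    -- cost strictly decreases
    have hcost : ∑ x, ∑ y, cantor x y * π' x y
        = (∑ x, ∑ y, cantor x y * π x y)
          + ε * (cantor u v + cantor x1 x2 - cantor u x2 - cantor x1 v) := by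
      rw [← Fintype.sum_prod_type' (fun x y => cantor x y * π' x y),
        ← Fintype.sum_prod_type' (fun x y => cantor x y * π x y)]
      have expand : ∀ p : (Fin (k+1) → A) × (Fin (k+1) → A),
          cantor p.1 p.2 * π' p.1 p.2
          = cantor p.1 p.2 * π p.1 p.2
            + ε * ((cantor p.1 p.2 * if p = (u, v) then (1:ℝ) else 0)
              + (cantor p.1 p.2 * if p = (x1, x2) then (1:ℝ) else 0)
              - (cantor p.1 p.2 * if p = (u, x2) then (1:ℝ) else 0)
              - (cantor p.1 p.2 * if p = (x1, v) then (1:ℝ) else 0)) := by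
        intro p
        simp only [hπ'def]
        ring
      rw [Finset.sum_congr rfl (fun p _ => expand p), Finset.sum_add_distrib,
        ← Finset.mul_sum]
      simp only [Finset.sum_add_distrib, Finset.sum_sub_distrib, sum_cost_ind]
    have hle := hopt π' hcoupling
    rw [hcost] at hle
    have : ε * (cantor u v + cantor x1 x2 - cantor u x2 - cantor x1 v) < 0 :=
      mul_neg_of_pos_of_neg hεpos hΔ
    linarith
  exact ⟨by linarith, key⟩
end

section
/- Let p1^{k+1}, p2^{k+1} be probability distributions on A^{k+1} with marginals p1^k, p2^k on A^k (summing over the last letter), and define r^k(w) = min{p1^k(w), p2^k(w)} and r^{k+1}(u) = min{p1^{k+1}(u), p2^{k+1}(u)}. Then the optimal transport costs for the Cantor ground distance satisfy the recursion K^{k+1} = K^k + 2^{-k} Σ_{w∈A^k} ( r^k(w) − Σ_{a∈A} r^{k+1}(wa) ), where K^k (resp. K^{k+1}) is the minimal Kantorovich cost between p1^k and p2^k (resp. p1^{k+1} and p2^{k+1}) with Cantor ground distance. -/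
/-!
Write a word of length `k + 1` as `w a` with `w` of length `k`. Then `cantor (w a) (w' b)` is
`cantor w w'`, plus `2^{-k}` when `w = w'` and `a ≠ b`. So the cost of a plan `π` on `A^{k+1}` is the
cost of its block marginal `σ` on `A^k`, plus `2^{-k}` times the mass that `π` moves off the
diagonal inside the diagonal blocks.

Upper bound: every coupling `σ` of the marginals lifts to a coupling of `p1, p2`. In block `(w, w)`
the lift keeps the fraction `σ w w / min (marginal p1 w) (marginal p2 w)` of
`min (p1 (w a)) (p2 (w a))` on the diagonal, and it glues the rest block by block using the
conditional laws of the last letter.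

Lower bound: by induction on `k`, a coupling `σ` costs at least
`kant + 2^{-k} ∑ w, (min (p1 w) (p2 w) - σ w w)`. The induction step combines the cost decomposition
with the upper bound one level down.
-/

open Finset

section Words

variable {A : Type*} [DecidableEq A] {k : ℕ}

lemma lcpLen_snoc (w w' : Fin k → A) (a b : A) :
    lcpLen (Fin.snoc w a : Fin (k + 1) → A) (Fin.snoc w' b)
      = lcpLen w w' + if w = w' ∧ a = b then 1 else 0 := by
  simp only [lcpLen, card_filter, Fin.sum_univ_castSucc]
  congr 1
  · refine sum_congr rfl fun i _ => if_congr ?_ rfl rfl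
    simp [Fin.forall_fin_succ', Fin.snoc_castSucc, Fin.snoc_last, Fin.castSucc_le_castSucc_iff]
  · refine if_congr ?_ rfl rfl
    simp only [Fin.le_last, forall_const]
    exact funext_iff.symm.trans Fin.snoc_inj

lemma lcpLen_self (w : Fin k → A) : lcpLen w w = k := by
  simp [lcpLen]

lemma cantor_self (w : Fin k → A) : cantor w w = 0 := if_pos rfl

lemma cantor_nonneg_s6 (w w' : Fin k → A) : 0 ≤ cantor w w' := by
  unfold cantor; split_ifs <;> positivity

lemma cantor_snoc (w w' : Fin k → A) (a b : A) :
    cantor (Fin.snoc w a : Fin (k + 1) → A) (Fin.snoc w' b)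
      = cantor w w' + if w = w' ∧ a ≠ b then (2 : ℝ) ^ (-(k : ℤ)) else 0 := by
  by_cases hw : w = w'
  · subst hw
    by_cases hab : a = b
    · simp [hab, cantor_self]
    · simp [cantor, Fin.snoc_inj, hab, lcpLen_snoc, lcpLen_self]
  · simp [cantor, Fin.snoc_inj, hw, lcpLen_snoc]

end Words

section Coupling

variable {X : Type*} [Fintype X]

def transportCost (D π : X → X → ℝ) : ℝ := ∑ x, ∑ y, D x y * π x y

lemma transportCost_nonneg {D π : X → X → ℝ} (hD : ∀ x y, 0 ≤ D x y) (hπ : ∀ x y, 0 ≤ π x y) :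
    0 ≤ transportCost D π :=
  sum_nonneg fun x _ => sum_nonneg fun y _ => mul_nonneg (hD x y) (hπ x y)

lemma kant_le_transportCost {D : X → X → ℝ} (hD : ∀ x y, 0 ≤ D x y) {p1 p2 : X → ℝ}
    {π : X → X → ℝ} (hπ : IsCoupling p1 p2 π) : kant D p1 p2 ≤ transportCost D π :=
  csInf_le ⟨0, by rintro c ⟨π', hπ', rfl⟩; exact transportCost_nonneg hD hπ'.1⟩ ⟨π, hπ, rfl⟩

lemma le_kant {D : X → X → ℝ} {p1 p2 : X → ℝ} {b : ℝ} (hne : ∃ π, IsCoupling p1 p2 π)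
    (hb : ∀ π, IsCoupling p1 p2 π → b ≤ transportCost D π) : b ≤ kant D p1 p2 := by
  obtain ⟨π, hπ⟩ := hne
  exact le_csInf ⟨_, π, hπ, rfl⟩ fun c ⟨π', hπ', hc⟩ => hc ▸ hb π' hπ'

lemma IsProbDist.isCoupling_mul {p1 p2 : X → ℝ} (hp1 : IsProbDist p1) (hp2 : IsProbDist p2) :
    IsCoupling p1 p2 fun x y => p1 x * p2 y :=
  ⟨fun x y => mul_nonneg (hp1.1 x) (hp2.1 y), fun x => by rw [← mul_sum, hp2.2, mul_one],
    fun y => by rw [← sum_mul, hp1.2, one_mul]⟩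

def diagonalCoupling [DecidableEq X] (d : X → ℝ) (x y : X) : ℝ := if x = y then d x else 0

namespace IsCoupling

variable {p1 p2 : X → ℝ} {π : X → X → ℝ}

lemma nonneg_left (hπ : IsCoupling p1 p2 π) (x : X) : 0 ≤ p1 x :=
  hπ.2.1 x ▸ sum_nonneg fun y _ => hπ.1 x y

lemma nonneg_right (hπ : IsCoupling p1 p2 π) (y : X) : 0 ≤ p2 y :=
  hπ.2.2 y ▸ sum_nonneg fun x _ => hπ.1 x y

lemma diag_le_min (hπ : IsCoupling p1 p2 π) (x : X) : π x x ≤ min (p1 x) (p2 x) :=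
  le_min (hπ.2.1 x ▸ single_le_sum (fun y _ => hπ.1 x y) (mem_univ x))
    (hπ.2.2 x ▸ single_le_sum (fun y _ => hπ.1 y x) (mem_univ x))

lemma eq_zero_of_left_eq_zero (hπ : IsCoupling p1 p2 π) {x : X} (hx : p1 x = 0) (y : X) :
    π x y = 0 :=
  (sum_eq_zero_iff_of_nonneg fun y _ => hπ.1 x y).1 (hπ.2.1 x ▸ hx) y (mem_univ y)

lemma eq_zero_of_right_eq_zero (hπ : IsCoupling p1 p2 π) {y : X} (hy : p2 y = 0) (x : X) :
    π x y = 0 :=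
  (sum_eq_zero_iff_of_nonneg fun x _ => hπ.1 x y).1 (hπ.2.2 y ▸ hy) x (mem_univ x)

lemma mul_left_div_self (hπ : IsCoupling p1 p2 π) (x y : X) : π x y * (p1 x / p1 x) = π x y := by
  rw [← mul_div_assoc, mul_div_cancel_of_imp fun h => hπ.eq_zero_of_left_eq_zero h y]

lemma mul_right_div_self (hπ : IsCoupling p1 p2 π) (x y : X) : π x y * (p2 y / p2 y) = π x y := by
  rw [← mul_div_assoc, mul_div_cancel_of_imp fun h => hπ.eq_zero_of_right_eq_zero h x]

variable [DecidableEq X]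

lemma add_diagonal (hπ : IsCoupling p1 p2 π) {d : X → ℝ} (hd : ∀ x, 0 ≤ d x) :
    IsCoupling (p1 + d) (p2 + d) (π + diagonalCoupling d) := by
  refine ⟨fun x y => ?_, fun x => ?_, fun y => ?_⟩
  · have := hπ.1 x y
    by_cases h : x = y
    · subst h; simpa [diagonalCoupling] using add_nonneg this (hd x)
    · simpa [diagonalCoupling, h] using this
  · simp [sum_add_distrib, hπ.2.1 x, diagonalCoupling]
  · simp [sum_add_distrib, hπ.2.2 y, diagonalCoupling]

lemma sub_diagonal (hπ : IsCoupling p1 p2 π) {d : X → ℝ} (hd : ∀ x, d x ≤ π x x) :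
    IsCoupling (p1 - d) (p2 - d) (π - diagonalCoupling d) := by
  refine ⟨fun x y => ?_, fun x => ?_, fun y => ?_⟩
  · by_cases h : x = y
    · subst h; simpa [diagonalCoupling] using hd x
    · simpa [diagonalCoupling, h] using hπ.1 x y
  · simp [sum_sub_distrib, hπ.2.1 x, diagonalCoupling]
  · simp [sum_sub_distrib, hπ.2.2 y, diagonalCoupling]

end IsCoupling

lemma transportCost_add_diagonal [DecidableEq X] {D : X → X → ℝ} (hD : ∀ x, D x x = 0)
    (π : X → X → ℝ) (d : X → ℝ) :
    transportCost D (π + diagonalCoupling d) = transportCost D π := by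
  simp [transportCost, mul_add, sum_add_distrib, diagonalCoupling, hD]

end Coupling

section Blocks

variable {A : Type*} [Fintype A] {k : ℕ}

lemma sum_snoc {M : Type*} [AddCommMonoid M] (f : (Fin (k + 1) → A) → M) :
    ∑ u, f u = ∑ w : Fin k → A, ∑ a, f (Fin.snoc w a) := by
  rw [← (Fin.snocEquiv fun _ => A).sum_comp, Fintype.sum_prod_type, sum_comm]
  rfl

def marginal (p : (Fin (k + 1) → A) → ℝ) (w : Fin k → A) : ℝ := ∑ a, p (Fin.snoc w a)

def blockMarginal (π : (Fin (k + 1) → A) → (Fin (k + 1) → A) → ℝ) (w w' : Fin k → A) : ℝ :=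
  ∑ a, ∑ b, π (Fin.snoc w a) (Fin.snoc w' b)

lemma marginal_sub (p d : (Fin (k + 1) → A) → ℝ) : marginal (p - d) = marginal p - marginal d := by
  ext w
  simp [marginal, sum_sub_distrib]

lemma le_marginal {p : (Fin (k + 1) → A) → ℝ} (hp : ∀ u, 0 ≤ p u) (u : Fin (k + 1) → A) :
    p u ≤ marginal p (Fin.init u) := by
  conv_lhs => rw [← Fin.snoc_init_self u]
  exact single_le_sum (fun a _ => hp _) (mem_univ _)

lemma IsCoupling.blockMarginal {p1 p2 : (Fin (k + 1) → A) → ℝ}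
    {π : (Fin (k + 1) → A) → (Fin (k + 1) → A) → ℝ} (hπ : IsCoupling p1 p2 π) :
    IsCoupling (marginal p1) (marginal p2) (blockMarginal π) := by
  refine ⟨fun w w' => sum_nonneg fun a _ => sum_nonneg fun b _ => hπ.1 _ _, fun w => ?_,
    fun w' => ?_⟩
  · calc ∑ w', _root_.blockMarginal π w w'
        = ∑ a, ∑ v, π (Fin.snoc w a) v := by
          simp only [_root_.blockMarginal]
          rw [sum_comm]
          exact sum_congr rfl fun a _ => (sum_snoc _).symm
      _ = marginal p1 w := sum_congr rfl fun a _ => hπ.2.1 _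
  · calc ∑ w, _root_.blockMarginal π w w'
        = ∑ u, ∑ b, π u (Fin.snoc w' b) := (sum_snoc fun u => ∑ b, π u (Fin.snoc w' b)).symm
      _ = ∑ b, ∑ u, π u (Fin.snoc w' b) := sum_comm
      _ = marginal p2 w' := sum_congr rfl fun b _ => hπ.2.2 _

variable [DecidableEq A]

lemma transportCost_cantor_snoc (π : (Fin (k + 1) → A) → (Fin (k + 1) → A) → ℝ) :
    transportCost cantor π = transportCost cantor (blockMarginal π)
      + (2 : ℝ) ^ (-(k : ℤ)) * ∑ w, (blockMarginal π w w - ∑ a, π (Fin.snoc w a) (Fin.snoc w a)) := by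
  simp only [transportCost, blockMarginal, sum_snoc, cantor_snoc, add_mul, sum_add_distrib]
  congr 1
  · refine sum_congr rfl fun w _ => ?_
    rw [sum_comm]
    simp only [mul_sum]
  · simp only [ite_and, ite_mul, zero_mul]
    simp [sum_ite_irrel, sum_ite, filter_ne, sum_erase_eq_sub, mul_sub, mul_sum, sum_sub_distrib]

end Blocks

section Glue

variable {A : Type*} [Fintype A] {k : ℕ}

-- The conditional law of the last letter given the prefix; `x / 0 = 0` makes it vanish on
-- prefixes of mass zero.
noncomputable def conditional (r : (Fin (k + 1) → A) → ℝ) (u : Fin (k + 1) → A) : ℝ :=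
  r u / marginal r (Fin.init u)

lemma sum_conditional_snoc (r : (Fin (k + 1) → A) → ℝ) (w : Fin k → A) :
    ∑ a, conditional r (Fin.snoc w a) = marginal r w / marginal r w := by
  simp only [conditional, Fin.init_snoc, ← sum_div]
  rfl

lemma marginal_mul_conditional {r : (Fin (k + 1) → A) → ℝ} (hr : ∀ u, 0 ≤ r u)
    (u : Fin (k + 1) → A) : marginal r (Fin.init u) * conditional r u = r u :=
  mul_div_cancel_of_imp' fun h => le_antisymm (h ▸ le_marginal hr u) (hr u)

noncomputable def glue (r1 r2 : (Fin (k + 1) → A) → ℝ) (σ : (Fin k → A) → (Fin k → A) → ℝ)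
    (u v : Fin (k + 1) → A) : ℝ :=
  σ (Fin.init u) (Fin.init v) * conditional r1 u * conditional r2 v

variable {r1 r2 : (Fin (k + 1) → A) → ℝ} {σ : (Fin k → A) → (Fin k → A) → ℝ}

lemma blockMarginal_glue (hσ : IsCoupling (marginal r1) (marginal r2) σ) :
    blockMarginal (glue r1 r2 σ) = σ := by
  ext w w'
  simp only [blockMarginal, glue, Fin.init_snoc, ← mul_sum, ← sum_mul, sum_conditional_snoc]
  rw [hσ.mul_left_div_self, hσ.mul_right_div_self]

lemma IsCoupling.glue (hr1 : ∀ u, 0 ≤ r1 u) (hr2 : ∀ u, 0 ≤ r2 u)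
    (hσ : IsCoupling (marginal r1) (marginal r2) σ) : IsCoupling r1 r2 (glue r1 r2 σ) := by
  refine ⟨fun u v => ?_, fun u => ?_, fun v => ?_⟩
  · exact mul_nonneg (mul_nonneg (hσ.1 _ _) (div_nonneg (hr1 u) (hσ.nonneg_left _)))
      (div_nonneg (hr2 v) (hσ.nonneg_right _))
  · calc ∑ v, _root_.glue r1 r2 σ u v
        = (∑ w', σ (Fin.init u) w' * (marginal r2 w' / marginal r2 w')) * conditional r1 u := by
          simp only [sum_snoc, _root_.glue, Fin.init_snoc, ← mul_sum, sum_conditional_snoc, sum_mul]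
          exact sum_congr rfl fun w' _ => mul_right_comm _ _ _
      _ = r1 u := by simp only [hσ.mul_right_div_self, hσ.2.1, marginal_mul_conditional hr1]
  · calc ∑ u, _root_.glue r1 r2 σ u v
        = (∑ w, σ w (Fin.init v) * (marginal r1 w / marginal r1 w)) * conditional r2 v := by
          simp only [sum_snoc, _root_.glue, Fin.init_snoc, ← sum_mul, ← mul_sum, sum_conditional_snoc]
      _ = r2 v := by simp only [hσ.mul_left_div_self, hσ.2.2, marginal_mul_conditional hr2]

end Glue

section Recursion

variable {A : Type*} [Fintype A] [DecidableEq A] {k : ℕ}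

lemma exists_coupling_transportCost_le_of_diagonal {p1 p2 d : (Fin (k + 1) → A) → ℝ}
    {σ : (Fin k → A) → (Fin k → A) → ℝ} (hσ : IsCoupling (marginal p1) (marginal p2) σ)
    (hd : ∀ u, 0 ≤ d u) (hdp1 : ∀ u, d u ≤ p1 u) (hdp2 : ∀ u, d u ≤ p2 u)
    (hdσ : ∀ w, marginal d w ≤ σ w w) :
    ∃ π, IsCoupling p1 p2 π ∧ transportCost cantor π
      ≤ transportCost cantor σ + (2 : ℝ) ^ (-(k : ℤ)) * ∑ w, (σ w w - marginal d w) := by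
  set σ' := σ - diagonalCoupling (marginal d)
  have hσ' : IsCoupling (marginal (p1 - d)) (marginal (p2 - d)) σ' := by
    simpa only [marginal_sub] using hσ.sub_diagonal hdσ
  have hτ : IsCoupling (p1 - d) (p2 - d) (glue (p1 - d) (p2 - d) σ') :=
    hσ'.glue (fun u => sub_nonneg.2 (hdp1 u)) (fun u => sub_nonneg.2 (hdp2 u))
  refine ⟨glue (p1 - d) (p2 - d) σ' + diagonalCoupling d,
    by simpa only [sub_add_cancel] using hτ.add_diagonal hd, ?_⟩
  have hσσ' : transportCost cantor σ = transportCost cantor σ' := by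
    rw [← sub_add_cancel σ (diagonalCoupling (marginal d)), transportCost_add_diagonal cantor_self]
  have hσ'_diag : ∀ w, σ' w w = σ w w - marginal d w := fun w => by simp [σ', diagonalCoupling]
  rw [transportCost_add_diagonal cantor_self, transportCost_cantor_snoc, blockMarginal_glue hσ',
    hσσ']
  refine add_le_add le_rfl (mul_le_mul_of_nonneg_left (sum_le_sum fun w _ => ?_) (by positivity))
  have hτ_diag : 0 ≤ ∑ a, glue (p1 - d) (p2 - d) σ' (Fin.snoc w a) (Fin.snoc w a) :=
    sum_nonneg fun a _ => hτ.1 _ _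
  linarith [hσ'_diag w]

lemma exists_coupling_transportCost_le {p1 p2 : (Fin (k + 1) → A) → ℝ}
    {σ : (Fin k → A) → (Fin k → A) → ℝ} (hp1 : ∀ u, 0 ≤ p1 u) (hp2 : ∀ u, 0 ≤ p2 u)
    (hσ : IsCoupling (marginal p1) (marginal p2) σ) :
    ∃ π, IsCoupling p1 p2 π ∧ transportCost cantor π
      ≤ transportCost cantor σ + (2 : ℝ) ^ (-(k : ℤ)) * ∑ w, (min (marginal p1 w) (marginal p2 w)
          - ∑ a, min (p1 (Fin.snoc w a)) (p2 (Fin.snoc w a))) := by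
  set m := fun w => min (marginal p1 w) (marginal p2 w)
  have hm : ∀ w, 0 ≤ m w := fun w => le_min (hσ.nonneg_left w) (hσ.nonneg_right w)
  have hμm : ∀ w, ∑ a, min (p1 (Fin.snoc w a)) (p2 (Fin.snoc w a)) ≤ m w := fun w =>
    le_min (sum_le_sum fun a _ => min_le_left _ _) (sum_le_sum fun a _ => min_le_right _ _)
  set α := fun w => σ w w / m w
  have hα0 : ∀ w, 0 ≤ α w := fun w => div_nonneg (hσ.1 w w) (hm w)
  have hα1 : ∀ w, α w ≤ 1 := fun w => div_le_one_of_le₀ (hσ.diag_le_min w) (hm w)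
  have hαm : ∀ w, α w * m w = σ w w := fun w =>
    div_mul_cancel_of_imp fun h => le_antisymm (h ▸ hσ.diag_le_min w) (hσ.1 w w)
  set d := fun u => α (Fin.init u) * min (p1 u) (p2 u)
  have hd_le : ∀ u, d u ≤ min (p1 u) (p2 u) := fun u =>
    mul_le_of_le_one_left (le_min (hp1 u) (hp2 u)) (hα1 _)
  have hd_marg : ∀ w, marginal d w = α w * ∑ a, min (p1 (Fin.snoc w a)) (p2 (Fin.snoc w a)) :=
    fun w => by simp [marginal, d, mul_sum]
  obtain ⟨π, hπ, hcost⟩ := exists_coupling_transportCost_le_of_diagonal hσ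
    (fun u => mul_nonneg (hα0 _) (le_min (hp1 u) (hp2 u)))
    (fun u => (hd_le u).trans (min_le_left _ _)) (fun u => (hd_le u).trans (min_le_right _ _))
    (fun w => by rw [hd_marg, ← hαm]; exact mul_le_mul_of_nonneg_left (hμm w) (hα0 w))
  refine ⟨π, hπ, hcost.trans
    (add_le_add le_rfl (mul_le_mul_of_nonneg_left (sum_le_sum fun w _ => ?_) (by positivity)))⟩
  rw [hd_marg, ← hαm w, ← mul_sub]
  exact mul_le_of_le_one_left (sub_nonneg.2 (hμm w)) (hα1 w)

lemma kant_le_kant_marginal_add {p1 p2 : (Fin (k + 1) → A) → ℝ} (hne : ∃ π, IsCoupling p1 p2 π) :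
    kant cantor p1 p2 ≤ kant cantor (marginal p1) (marginal p2)
      + (2 : ℝ) ^ (-(k : ℤ)) * ∑ w, (min (marginal p1 w) (marginal p2 w)
          - ∑ a, min (p1 (Fin.snoc w a)) (p2 (Fin.snoc w a))) := by
  obtain ⟨π, hπ⟩ := hne
  rw [← sub_le_iff_le_add]
  refine le_kant ⟨_, hπ.blockMarginal⟩ fun σ hσ => ?_
  obtain ⟨π', hπ', hcost⟩ := exists_coupling_transportCost_le hπ.nonneg_left hπ.nonneg_right hσ
  linarith [kant_le_transportCost cantor_nonneg_s6 hπ']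

lemma kant_marginal_add_le_transportCost {p1 p2 : (Fin (k + 1) → A) → ℝ}
    {π : (Fin (k + 1) → A) → (Fin (k + 1) → A) → ℝ}
    (hπ : kant cantor (marginal p1) (marginal p2) + (2 : ℝ) ^ (-(k : ℤ)) *
        ∑ w, (min (marginal p1 w) (marginal p2 w) - blockMarginal π w w)
      ≤ transportCost cantor (blockMarginal π)) :
    kant cantor (marginal p1) (marginal p2) + (2 : ℝ) ^ (-(k : ℤ)) *
        ∑ w, (min (marginal p1 w) (marginal p2 w) - ∑ a, π (Fin.snoc w a) (Fin.snoc w a))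
      ≤ transportCost cantor π := by
  rw [transportCost_cantor_snoc]
  simp only [sum_sub_distrib, mul_sub] at hπ ⊢
  linarith

theorem kant_add_le_transportCost {p1 p2 : (Fin k → A) → ℝ}
    {σ : (Fin k → A) → (Fin k → A) → ℝ} (hσ : IsCoupling p1 p2 σ) :
    kant cantor p1 p2 + (2 : ℝ) ^ (-(k : ℤ)) * ∑ w, (min (p1 w) (p2 w) - σ w w)
      ≤ transportCost cantor σ := by
  induction k with
  | zero =>
    have hdeficit : ∑ w, (min (p1 w) (p2 w) - σ w w) ≤ 0 := sum_nonpos fun w _ => by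
      rw [← hσ.2.1 w, Fintype.sum_subsingleton _ w]
      exact sub_nonpos.2 (min_le_left _ _)
    have := kant_le_transportCost cantor_nonneg_s6 hσ
    simp only [CharP.cast_eq_zero, neg_zero, zpow_zero, one_mul]
    linarith
  | succ k ih =>
    have hstep := kant_marginal_add_le_transportCost (ih hσ.blockMarginal)
    have hup := kant_le_kant_marginal_add ⟨σ, hσ⟩
    have hdeficit : 0 ≤ ∑ w, ∑ a,
        (min (p1 (Fin.snoc w a)) (p2 (Fin.snoc w a)) - σ (Fin.snoc w a) (Fin.snoc w a)) :=
      sum_nonneg fun w _ => sum_nonneg fun a _ => sub_nonneg.2 (hσ.diag_le_min _)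
    have hc : (2 : ℝ) ^ (-((k + 1 : ℕ) : ℤ)) ≤ 2 ^ (-(k : ℤ)) :=
      zpow_le_zpow_right₀ one_le_two (by omega)
    -- `hup` and `hstep` give the bound with the larger weight `2^{-k}` on the deficit at level `k + 1`
    have := mul_le_mul_of_nonneg_right hc hdeficit
    rw [sum_snoc]
    simp only [sum_sub_distrib, mul_sub] at hstep hup this ⊢
    linarith

lemma kant_marginal_add_le_kant {p1 p2 : (Fin (k + 1) → A) → ℝ} (hne : ∃ π, IsCoupling p1 p2 π) :
    kant cantor (marginal p1) (marginal p2)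
      + (2 : ℝ) ^ (-(k : ℤ)) * ∑ w, (min (marginal p1 w) (marginal p2 w)
          - ∑ a, min (p1 (Fin.snoc w a)) (p2 (Fin.snoc w a))) ≤ kant cantor p1 p2 := by
  refine le_kant hne fun π hπ => ?_
  calc _ ≤ kant cantor (marginal p1) (marginal p2) + (2 : ℝ) ^ (-(k : ℤ)) *
          ∑ w, (min (marginal p1 w) (marginal p2 w) - ∑ a, π (Fin.snoc w a) (Fin.snoc w a)) := by
        gcongr with w a
        exact hπ.diag_le_min _
    _ ≤ transportCost cantor π :=
        kant_marginal_add_le_transportCost (kant_add_le_transportCost hπ.blockMarginal)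

end Recursion

theorem cantor_kantorovich_recursion_general {A : Type*} [Fintype A] [DecidableEq A] {k : ℕ}
    (p1 p2 : (Fin (k + 1) → A) → ℝ) (hp1 : IsProbDist p1) (hp2 : IsProbDist p2) :
    kant cantor p1 p2
      = kant cantor (fun w : Fin k → A => ∑ a : A, p1 (Fin.snoc w a))
          (fun w : Fin k → A => ∑ a : A, p2 (Fin.snoc w a))
        + (2 : ℝ) ^ (-(k : ℤ)) *
          ∑ w : Fin k → A,
            (min (∑ a : A, p1 (Fin.snoc w a)) (∑ a : A, p2 (Fin.snoc w a))
              - ∑ a : A, min (p1 (Fin.snoc w a)) (p2 (Fin.snoc w a))) := by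
  have hne : ∃ π, IsCoupling p1 p2 π := ⟨_, hp1.isCoupling_mul hp2⟩
  exact le_antisymm (kant_le_kant_marginal_add hne) (kant_marginal_add_le_kant hne)

/-- Recursion for the Kantorovich cost with Cantor ground distance between distributions on
`A^{k+1}` and their marginals on `A^k`. -/
theorem cantor_kantorovich_recursion {A : Type*} [Fintype A] [DecidableEq A] {k : ℕ}
    (hk : 1 ≤ k)
    (p1 p2 : (Fin (k + 1) → A) → ℝ) (hp1 : IsProbDist p1) (hp2 : IsProbDist p2) :
    kant cantor p1 p2
      = kant cantor (fun w : Fin k → A => ∑ a : A, p1 (Fin.snoc w a))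
          (fun w : Fin k → A => ∑ a : A, p2 (Fin.snoc w a))
        + (2 : ℝ) ^ (-(k : ℤ)) *
          ∑ w : Fin k → A,
            (min (∑ a : A, p1 (Fin.snoc w a)) (∑ a : A, p2 (Fin.snoc w a))
              - ∑ a : A, min (p1 (Fin.snoc w a)) (p2 (Fin.snoc w a))) :=
  cantor_kantorovich_recursion_general p1 p2 hp1 hp2
end

section
/- Let (p1^k)_{k≥1} and (p2^k)_{k≥1} be consistent families of probability distributions on A^k, and let K^k denote the minimal Kantorovich cost between p1^k and p2^k with the Cantor ground distance. Then the sequence (K^k) is nondecreasing and bounded above by 1, hence convergent; its limit CK satisfies, for every k ≥ 1, 0 ≤ CK − K^k ≤ 2^{1−k} S_k, where S_k = Σ_{w∈A^k} min{p1^k(w), p2^k(w)}. -/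
/-- `K^k`: the minimal Kantorovich cost between `p k` and `q k` with Cantor ground distance. -/
noncomputable def Kseq {A : Type*} [Fintype A] [DecidableEq A]
    (p q : ∀ k : ℕ, (Fin k → A) → ℝ) (k : ℕ) : ℝ :=
  kant cantor (p k) (q k)

/-- `S_k = Σ_{w ∈ A^k} min{p^k(w), q^k(w)}`. -/
noncomputable def Sseq {A : Type*} [Fintype A] [DecidableEq A]
    (p q : ∀ k : ℕ, (Fin k → A) → ℝ) (k : ℕ) : ℝ :=
  ∑ w : Fin k → A, min (p k w) (q k w)

open Filter Topology

theorem sum_fin_succ_pi_eq_sum_sum_snoc {A M : Type*} [Fintype A] [AddCommMonoid M] {k : ℕ}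
    (f : (Fin (k + 1) → A) → M) :
    ∑ w, f w = ∑ w : Fin k → A, ∑ a : A, f (Fin.snoc w a) := by
  rw [← (Fin.snocEquiv fun _ => A).sum_comp, Fintype.sum_prod_type, Finset.sum_comm]
  rfl

section Overlap

variable {A : Type*} [Fintype A] [DecidableEq A] (p q : ∀ k : ℕ, (Fin k → A) → ℝ)

theorem Sseq_nonneg {k : ℕ} (hp : ∀ w, 0 ≤ p k w) (hq : ∀ w, 0 ≤ q k w) :
    0 ≤ Sseq p q k :=
  Finset.sum_nonneg fun w _ => le_min (hp w) (hq w)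

theorem Sseq_succ_le {k : ℕ}
    (hpc : ∀ w : Fin k → A, p k w = ∑ a : A, p (k + 1) (Fin.snoc w a))
    (hqc : ∀ w : Fin k → A, q k w = ∑ a : A, q (k + 1) (Fin.snoc w a)) :
    Sseq p q (k + 1) ≤ Sseq p q k := by
  rw [Sseq, sum_fin_succ_pi_eq_sum_sum_snoc]
  refine Finset.sum_le_sum fun w _ => le_min ?_ ?_
  · rw [hpc w]
    exact Finset.sum_le_sum fun a _ => min_le_left _ _
  · rw [hqc w]
    exact Finset.sum_le_sum fun a _ => min_le_right _ _

end Overlap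

theorem exists_tendsto_of_monotone_of_antitone {b u : ℕ → ℝ} (hb : Monotone b) (hu : Antitone u)
    (hbu : b ≤ u) : ∃ c, Tendsto b atTop (𝓝 c) ∧ ∀ n, b n ≤ c ∧ c ≤ u n := by
  have hc := Set.mem_iInter.mp (hb.ciSup_mem_iInter_Icc_of_antitone hu hbu)
  refine ⟨⨆ n, b n, tendsto_atTop_ciSup hb ⟨u 0, ?_⟩, hc⟩
  rintro _ ⟨n, rfl⟩
  exact hb.forall_le_of_antitone hu hbu n 0

/-- The sequence `K^k` is nondecreasing, bounded above by 1, hence convergent, and its limit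
`CK` satisfies `0 ≤ CK − K^k ≤ 2^{1−k} S_k` for all `k ≥ 1`. -/
theorem cantor_kantorovich_convergence {A : Type*} [Fintype A] [DecidableEq A]
    (p q : ∀ k : ℕ, (Fin k → A) → ℝ)
    (hp : ∀ k, IsProbDist (p k)) (hq : ∀ k, IsProbDist (q k))
    (hpc : ∀ k (w : Fin k → A), p k w = ∑ a : A, p (k + 1) (Fin.snoc w a))
    (hqc : ∀ k (w : Fin k → A), q k w = ∑ a : A, q (k + 1) (Fin.snoc w a))
    (hrec : ∀ k : ℕ, 1 ≤ k →
      Kseq p q (k + 1) = Kseq p q k + (2 : ℝ) ^ (-(k : ℤ)) * (Sseq p q k - Sseq p q (k + 1)))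
    (hK1 : Kseq p q 1 = 1 - Sseq p q 1) :
    (∀ k : ℕ, 1 ≤ k → Kseq p q k ≤ Kseq p q (k + 1)) ∧
    (∀ k : ℕ, 1 ≤ k → Kseq p q k ≤ 1) ∧
    ∃ CK : ℝ, Filter.Tendsto (Kseq p q) Filter.atTop (nhds CK) ∧
      ∀ k : ℕ, 1 ≤ k →
        0 ≤ CK - Kseq p q k ∧
        CK - Kseq p q k ≤ (2 : ℝ) ^ (1 - (k : ℤ)) * Sseq p q k := by
  have hS0 k : 0 ≤ Sseq p q k := Sseq_nonneg p q (hp k).1 (hq k).1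
  have hS k : Sseq p q (k + 1) ≤ Sseq p q k := Sseq_succ_le p q (hpc k) (hqc k)
  have hexp (m : ℕ) : (1 : ℤ) - (m + 1 : ℕ) = -m := by push_cast; ring
  set b : ℕ → ℝ := fun m => Kseq p q (m + 1)
  set u : ℕ → ℝ := fun m => Kseq p q (m + 1) + (2 : ℝ) ^ (-(m : ℤ)) * Sseq p q (m + 1)
  have hstep m : b m ≤ b (m + 1) ∧ u (m + 1) ≤ u m := by
    have h2 : (2 : ℝ) ^ (-(m + 1 : ℕ) : ℤ) = 2 ^ (-(m + 1 : ℤ)) := by push_cast; rfl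
    have hhalf : (2 : ℝ) ^ (-(m : ℤ)) = 2 * 2 ^ (-(m + 1 : ℤ)) := by
      rw [zpow_neg, zpow_neg, zpow_add_one₀ two_ne_zero]; field_simp
    have hpos : (0 : ℝ) < 2 ^ (-(m + 1 : ℤ)) := by positivity
    simp only [b, u, hrec (m + 1) m.succ_pos, h2, hhalf]
    constructor <;> nlinarith [hS (m + 1), hS0 (m + 1)]
  have hbu : b ≤ u := fun m => le_add_of_nonneg_right (by positivity [hS0 (m + 1)])
  have hb : Monotone b := monotone_nat_of_le_succ fun m => (hstep m).1
  have hu : Antitone u := antitone_nat_of_succ_le fun m => (hstep m).2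
  have hu0 : u 0 = 1 := by simp [u, hK1]
  obtain ⟨c, hc, hbcu⟩ := exists_tendsto_of_monotone_of_antitone hb hu hbu
  refine ⟨?_, ?_, c, (tendsto_add_atTop_iff_nat 1).mp hc, ?_⟩ <;> intro k hk <;>
    obtain ⟨m, rfl⟩ := Nat.exists_eq_add_of_le' hk
  · exact (hstep m).1
  · exact (hbu m).trans ((hu m.zero_le).trans hu0.le)
  · obtain ⟨hbc, hcu⟩ := hbcu m
    rw [hexp]
    constructor <;> linarith
end
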